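/- Let r ≥ 2 be a natural number, let α_1, …, α_r be positive real numbers, let H_1, …, H_r : ℝ → ℝ be differentiable functions, and let φ_2, …, φ_{r-1} : ℝ → ℝ be functions with φ_i(t) ≥ 0 for all t ≥ 0. Suppose: (i) for every t ≥ 0, H_1'(t) = H_2(t) - 2α_1·H_1(t); (ii) for every i with 2 ≤ i ≤ r-1 and every t ≥ 0, H_i'(t) = φ_i(t) + H_{i+1}(t) - (α_1 + α_i)·H_i(t); (iii) for every t ≥ 0, H_r'(t) ≥ -(α_1 + α_r)·H_r(t); and (iv) H_i(0) ≥ 0 for every 1 ≤ i ≤ r. Then H_i(t) ≥ 0 for every 1 ≤ i ≤ r and every t ≥ 0. -/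

import Mathlib

/-!
Once `H_{i+1}` and `φ_i` are known to be nonnegative, the equation for `H_i` gives
`H_i' ≥ -K H_i` with `K = α_1 + α_i`, and a function with `f 0 ≥ 0` obeying such a linear
differential inequality stays nonnegative. Hence nonnegativity propagates down the cascade,
from `i = r` to `i = 1`.
-/

open Real Set

lemma nonneg_of_neg_mul_le_deriv {f : ℝ → ℝ} {K : ℝ} (hf : Differentiable ℝ f) (h0 : 0 ≤ f 0)
    (hd : ∀ t ≥ (0:ℝ), -K * f t ≤ deriv f t) {t : ℝ} (ht : 0 ≤ t) : 0 ≤ f t := by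
  -- the integrating factor `exp (K s)` turns the differential inequality into monotonicity
  set g : ℝ → ℝ := fun s => exp (K * s) * f s
  have hg : ∀ s, HasDerivAt g (exp (K * s) * (deriv f s + K * f s)) s := fun s =>
    ((((hasDerivAt_id s).const_mul K).exp).mul (hf s).hasDerivAt).congr_deriv
      (by simp only [id, mul_one]; ring)
  have hmono : MonotoneOn g (Ici 0) := by
    refine monotoneOn_of_hasDerivWithinAt_nonneg (convex_Ici 0)
      (fun s _ => (hg s).continuousAt.continuousWithinAt) (fun s _ => (hg s).hasDerivWithinAt) ?_
    intro s hs
    rw [interior_Ici] at hs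
    have := hd s (le_of_lt hs)
    exact mul_nonneg (exp_pos _).le (by linarith)
  have hgt : f 0 ≤ exp (K * t) * f t := by
    simpa [g] using hmono self_mem_Ici ht ht
  exact nonneg_of_mul_nonneg_right (h0.trans hgt) (exp_pos _)

theorem cascade_nonneg_with_forcing_general
    (r : ℕ) (α : ℕ → ℝ)
    (H : ℕ → ℝ → ℝ) (hdiff : ∀ i, 1 ≤ i → i ≤ r → Differentiable ℝ (H i))
    (φ : ℕ → ℝ → ℝ) (hφ : ∀ i, 2 ≤ i → i ≤ r - 1 → ∀ t ≥ (0:ℝ), 0 ≤ φ i t)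
    (h1 : ∀ t ≥ (0:ℝ), deriv (H 1) t = H 2 t - 2 * α 1 * H 1 t)
    (hmid : ∀ i, 2 ≤ i → i ≤ r - 1 → ∀ t ≥ (0:ℝ),
      deriv (H i) t = φ i t + H (i + 1) t - (α 1 + α i) * H i t)
    (hlast : ∀ t ≥ (0:ℝ), deriv (H r) t ≥ -(α 1 + α r) * H r t)
    (h0 : ∀ i, 1 ≤ i → i ≤ r → 0 ≤ H i 0) :
    ∀ i, 1 ≤ i → i ≤ r → ∀ t ≥ (0:ℝ), 0 ≤ H i t := by
  intro i hi1 hir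
  induction hir using Nat.decreasingInduction with
  | self => exact fun t => nonneg_of_neg_mul_le_deriv (hdiff r hi1 le_rfl) (h0 r hi1 le_rfl) hlast
  | of_succ i hir ih =>
    have hnext := ih (by omega)
    rcases hi1.eq_or_lt with rfl | hi2
    · refine fun t => nonneg_of_neg_mul_le_deriv (K := 2 * α 1) (hdiff 1 le_rfl hir.le)
        (h0 1 le_rfl hir.le) fun s hs => ?_
      rw [h1 s hs]
      linarith [hnext s hs]
    · refine fun t => nonneg_of_neg_mul_le_deriv (K := α 1 + α i) (hdiff i hi1 hir.le)
        (h0 i hi1 hir.le) fun s hs => ?_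
      rw [hmid i hi2 (by omega) s hs]
      linarith [hnext s hs, hφ i hi2 (by omega) s hs]

/-- differential-inequality cascade in the proof of claim (a) of Theorem 2,
relative degree `r > 1`. With nonnegative forcing terms `φ_i`, the cascade propagates
nonnegativity of all `H_i` forward in time. -/
theorem cascade_nonneg_with_forcing
    (r : ℕ) (hr : 2 ≤ r) (α : ℕ → ℝ) (hα : ∀ i, 1 ≤ i → i ≤ r → 0 < α i)
    (H : ℕ → ℝ → ℝ) (hdiff : ∀ i, 1 ≤ i → i ≤ r → Differentiable ℝ (H i))
    (φ : ℕ → ℝ → ℝ) (hφ : ∀ i, 2 ≤ i → i ≤ r - 1 → ∀ t ≥ (0:ℝ), 0 ≤ φ i t)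
    (h1 : ∀ t ≥ (0:ℝ), deriv (H 1) t = H 2 t - 2 * α 1 * H 1 t)
    (hmid : ∀ i, 2 ≤ i → i ≤ r - 1 → ∀ t ≥ (0:ℝ),
      deriv (H i) t = φ i t + H (i + 1) t - (α 1 + α i) * H i t)
    (hlast : ∀ t ≥ (0:ℝ), deriv (H r) t ≥ -(α 1 + α r) * H r t)
    (h0 : ∀ i, 1 ≤ i → i ≤ r → 0 ≤ H i 0) :
    ∀ i, 1 ≤ i → i ≤ r → ∀ t ≥ (0:ℝ), 0 ≤ H i t :=
  cascade_nonneg_with_forcing_general r α H hdiff φ hφ h1 hmid hlast h0
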